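/- Let l ≥ 1, let n : Fin l → ℕ be positive, let J be a finite index type, and let m : J → ℕ be positive. If there exists an embedding of MV-algebras from ∏_{i<l} Ł_{n_i} into ∏_{j∈J} Ł_{m_j} (products with componentwise operations), then for every j ∈ J there exists i < l such that n_i divides m_j. -/

import Mathlib

/-!
Composing the embedding with the `j`-th projection gives a homomorphism `g : ∏ Ł_{n_i} → Ł_{m_j}`.
The unit vectors `e_i` are idempotent for `⊕`, hence so are their images,
and the idempotents of a chain are `0` and `1`; since the `e_i` add up to `1 = ¬0`, some `g e_i`
is `1`. For the atom `u` of the `i`-th factor, `¬u = (n_i - 1)u ⊕ ¬e_i`, so `a = g u` satisfies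
`1 - a = min 1 ((n_i - 1) a)`, which forces `n_i a = 1`; as `a = p / m_j`, `n_i ∣ m_j`.
-/

/-- The carrier of the Łukasiewicz chain Łₙ : {k/n : k ∈ ℕ, 0 ≤ k ≤ n} ⊆ ℚ. -/
abbrev Luk (n : ℕ+) : Type := {x : ℚ // ∃ k : ℕ, k ≤ (n : ℕ) ∧ x = (k : ℚ) / (n : ℕ)}

/-- The constant 0 of Łₙ. -/
def lukZero (n : ℕ+) : Luk n := ⟨0, 0, Nat.zero_le _, by simp⟩

/-- The negation ¬x = 1 - x of Łₙ. -/
def lukNeg {n : ℕ+} (x : Luk n) : Luk n :=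
  ⟨1 - x.1, by
    obtain ⟨k, hk, hx⟩ := x.2
    refine ⟨(n : ℕ) - k, Nat.sub_le _ _, ?_⟩
    have hn : ((n : ℕ) : ℚ) ≠ 0 := by exact_mod_cast n.pos.ne'
    rw [hx, Nat.cast_sub hk, sub_div, div_self hn]⟩

/-- The truncated sum x ⊕ y = min 1 (x + y) of Łₙ. -/
def lukOplus {n : ℕ+} (x y : Luk n) : Luk n :=
  ⟨min 1 (x.1 + y.1), by
    obtain ⟨k, hk, hx⟩ := x.2
    obtain ⟨j, hj, hy⟩ := y.2
    refine ⟨min (n : ℕ) (k + j), min_le_left _ _, ?_⟩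
    have hn : (0 : ℚ) < ((n : ℕ) : ℚ) := by exact_mod_cast n.pos
    rw [hx, hy, ← add_div]
    rcases le_total (k + j) (n : ℕ) with h | h
    · rw [min_eq_right h, min_eq_right]
      · push_cast; ring_nf
      · rw [div_le_one hn]; exact_mod_cast h
    · rw [min_eq_left h, min_eq_left, div_self hn.ne']
      · rw [one_le_div hn]; exact_mod_cast h⟩

lemma min_one_min_one_add {s c : ℚ} (hc : 0 ≤ c) : min 1 (min 1 s + c) = min 1 (s + c) := by
  simp only [min_def]
  split_ifs <;> linarith

instance (n : ℕ+) : One (Luk n) :=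
  ⟨⟨1, n, le_rfl, by simp⟩⟩

namespace Luk

variable {n : ℕ+}

lemma val_nonneg (x : Luk n) : 0 ≤ x.1 := by
  obtain ⟨k, -, hx⟩ := x.2
  rw [hx]
  positivity

lemma val_le_one (x : Luk n) : x.1 ≤ 1 := by
  obtain ⟨k, hk, hx⟩ := x.2
  rw [hx, div_le_one (by positivity)]
  exact_mod_cast hk

instance (n : ℕ+) : Zero (Luk n) :=
  ⟨lukZero n⟩

instance (n : ℕ+) : Add (Luk n) :=
  ⟨lukOplus⟩

/-- `⊕` is written `+`: by MV1–MV3 it makes Łₙ a commutative monoid, so maps preserving `⊕`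
and `0` are `AddMonoidHom`s. -/
instance (n : ℕ+) : AddCommMonoid (Luk n) where
  add_assoc x y z := Subtype.ext <| by
    change min 1 (min 1 (x.1 + y.1) + z.1) = min 1 (x.1 + min 1 (y.1 + z.1))
    rw [min_one_min_one_add z.val_nonneg, add_comm x.1 (min 1 _),
      min_one_min_one_add x.val_nonneg]
    ring_nf
  zero_add x := Subtype.ext <| by
    change min 1 (0 + x.1) = x.1
    simpa using x.val_le_one
  add_zero x := Subtype.ext <| by
    change min 1 (x.1 + 0) = x.1
    simpa using x.val_le_one
  add_comm x y := Subtype.ext <| by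
    change min 1 (x.1 + y.1) = min 1 (y.1 + x.1)
    rw [add_comm]
  nsmul := nsmulRec

@[simp] lemma val_zero : (0 : Luk n).1 = 0 := rfl

@[simp] lemma val_one : (1 : Luk n).1 = 1 := rfl

@[simp] lemma val_add (x y : Luk n) : (x + y).1 = min 1 (x.1 + y.1) := rfl

@[simp] lemma val_lukNeg (x : Luk n) : (lukNeg x).1 = 1 - x.1 := rfl

lemma val_nsmul (k : ℕ) (x : Luk n) : (k • x).1 = min 1 (k * x.1) := by
  induction k with
  | zero => simp
  | succ k ih =>
    rw [succ_nsmul, val_add, ih, min_one_min_one_add x.val_nonneg]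
    push_cast
    ring_nf

def atom (n : ℕ+) : Luk n :=
  ⟨1 / n, 1, n.pos, by simp⟩

@[simp] lemma val_atom : (atom n).1 = 1 / n := rfl

lemma eq_zero_or_eq_one_of_add_self {x : Luk n} (h : x + x = x) : x = 0 ∨ x = 1 := by
  have hval : min 1 (x.1 + x.1) = x.1 := congrArg Subtype.val h
  rcases le_total (x.1 + x.1) 1 with hle | hle
  · left
    apply Subtype.ext
    rw [min_eq_right hle] at hval
    simp only [val_zero]
    linarith
  · right
    apply Subtype.ext
    rw [min_eq_left hle] at hval
    exact hval.symm

lemma dvd_of_natCast_mul_val_eq_one {N : ℕ} {x : Luk n} (h : (N : ℚ) * x.1 = 1) :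
    N ∣ (n : ℕ) := by
  obtain ⟨p, -, hx⟩ := x.2
  rw [hx, mul_div_assoc', div_eq_one_iff_eq (by positivity)] at h
  exact ⟨p, by exact_mod_cast h.symm⟩

end Luk

section Hom

variable {ι : Type*} {n : ι → ℕ+} {M : ℕ+} (g : (∀ i, Luk (n i)) →+ Luk M)
  (hg : ∀ x, g (fun i => lukNeg (x i)) = lukNeg (g x))
include hg

lemma map_one_of_map_lukNeg : g 1 = 1 := by
  have h1 : (fun i => lukNeg ((0 : ∀ i, Luk (n i)) i)) = 1 := by
    funext i
    exact Subtype.ext (by simp)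
  rw [← h1, hg, map_zero]
  exact Subtype.ext (by simp)

lemma exists_map_single_one_eq_one [Fintype ι] [DecidableEq ι] :
    ∃ i, g (Pi.single i 1) = 1 := by
  have hidem (i : ι) : g (Pi.single i 1) + g (Pi.single i 1) = g (Pi.single i 1) := by
    rw [← map_add, ← Pi.single_add]
    congr 2
    exact Subtype.ext (by simp)
  by_contra! hne
  have hzero (i : ι) : g (Pi.single i 1) = 0 :=
    ((Luk.eq_zero_or_eq_one_of_add_self (hidem i)).resolve_right (hne i))
  have hsum : g 1 = 0 := by
    rw [← Finset.univ_sum_single (1 : ∀ i, Luk (n i)), map_sum]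
    exact Finset.sum_eq_zero fun i _ => hzero i
  have hval := congrArg Subtype.val ((map_one_of_map_lukNeg g hg).symm.trans hsum)
  simp at hval

lemma dvd_of_map_single_one_eq_one [DecidableEq ι] {i₀ : ι} (h : g (Pi.single i₀ 1) = 1) :
    (n i₀ : ℕ) ∣ (M : ℕ) := by
  obtain ⟨k, hk⟩ : ∃ k : ℕ, (n i₀ : ℕ) = k + 1 := Nat.exists_eq_add_one.mpr (n i₀).pos
  set e : ∀ i, Luk (n i) := Pi.single i₀ 1
  set u : ∀ i, Luk (n i) := Pi.single i₀ (Luk.atom (n i₀))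
  have hrel : (fun i => lukNeg (u i)) = k • u + fun i => lukNeg (e i) := by
    funext i
    apply Subtype.ext
    by_cases hi : i = i₀
    · subst hi
      simp only [u, e, Pi.add_apply, Pi.smul_apply, Pi.single_eq_same, Luk.val_add,
        Luk.val_lukNeg, Luk.val_nsmul, Luk.val_atom, Luk.val_one, hk]
      push_cast
      have hle : (k : ℚ) * (1 / (k + 1)) ≤ 1 := by
        rw [mul_one_div, div_le_one (by positivity)]
        linarith
      rw [sub_self, add_zero, min_eq_right (min_le_left _ _), min_eq_right hle]
      field_simp
      ring
    · simp [u, e, Pi.single_eq_of_ne hi]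
  have hval := congrArg Subtype.val (congrArg g hrel)
  rw [hg, map_add, map_nsmul, hg, h] at hval
  simp only [Luk.val_lukNeg, Luk.val_add, Luk.val_nsmul, Luk.val_one, sub_self, add_zero,
    min_eq_right (min_le_left _ _)] at hval
  apply Luk.dvd_of_natCast_mul_val_eq_one (x := g u)
  have ha := (g u).val_nonneg
  rcases le_total ((k : ℚ) * (g u).1) 1 with hle | hle
  · rw [min_eq_right hle] at hval
    rw [hk]
    push_cast
    linarith
  · rw [min_eq_left hle] at hval
    nlinarith

lemma exists_dvd_of_map_lukNeg [Fintype ι] : ∃ i, (n i : ℕ) ∣ (M : ℕ) := by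
  classical
  obtain ⟨i, hi⟩ := exists_map_single_one_eq_one g hg
  exact ⟨i, dvd_of_map_single_one_eq_one g hg hi⟩

end Hom

theorem embed_prod_dvd_backward_general (l : ℕ) (n : Fin l → ℕ+)
    (J : Type*) (m : J → ℕ+)
    (h : ∃ f : (∀ i, Luk (n i)) → ∀ j, Luk (m j), Function.Injective f ∧
      (∀ x y, f (fun i => lukOplus (x i) (y i)) = fun j => lukOplus (f x j) (f y j)) ∧
      (∀ x, f (fun i => lukNeg (x i)) = fun j => lukNeg (f x j)) ∧
      (f (fun i => lukZero (n i)) = fun j => lukZero (m j))) :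
    ∀ j : J, ∃ i : Fin l, (n i : ℕ) ∣ (m j : ℕ) := by
  obtain ⟨f, -, hadd, hneg, hzero⟩ := h
  intro j
  let g : (∀ i, Luk (n i)) →+ Luk (m j) :=
    { toFun := fun x => f x j
      map_zero' := congrFun hzero j
      map_add' := fun x y => congrFun (hadd x y) j }
  exact exists_dvd_of_map_lukNeg g fun x => congrFun (hneg x) j

/-- If ∏ Ł_(n i) embeds into ∏ Ł_(m j) (J finite), then every m j is divided by some n i. -/
theorem embed_prod_dvd_backward (l : ℕ) (hl : 1 ≤ l) (n : Fin l → ℕ+)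
    (J : Type*) [Fintype J] (m : J → ℕ+)
    (h : ∃ f : (∀ i, Luk (n i)) → ∀ j, Luk (m j), Function.Injective f ∧
      (∀ x y, f (fun i => lukOplus (x i) (y i)) = fun j => lukOplus (f x j) (f y j)) ∧
      (∀ x, f (fun i => lukNeg (x i)) = fun j => lukNeg (f x j)) ∧
      (f (fun i => lukZero (n i)) = fun j => lukZero (m j))) :
    ∀ j : J, ∃ i : Fin l, (n i : ℕ) ∣ (m j : ℕ) :=
  embed_prod_dvd_backward_general l n J m h
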